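/- Let A = kQ/<Z> with Q the crown of length n > 1 and Z = {a_0 γ^{m-1}} as above (γ = βa_0, β = a_{n-1}...a_1, m > 1). Then dim_k HH_1(A) = m if char k = p > 0 divides m, and dim_k HH_1(A) = m − 1 otherwise. -/

import Mathlib

/-!  Basic combinatorics of a quiver given by source/target maps `s t : A → V`.
A path of positive length is a list of arrows `[a₁, …, aₙ]` written in order of
traversal (so the written path `aₙ … a₁` of the paper corresponds to the list
`[a₁, …, aₙ]`).  -/

namespace Monomial

variable {V A : Type*}

/-- `l` is a path: consecutive arrows are composable. -/
def IsPath (s t : A → V) (l : List A) : Prop := l.Chain' fun a b => t a = s b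

/-- Source of a (nonempty) path. -/
def srcOf (s : A → V) (l : List A) : Option V := l.head?.map s

/-- Target of a (nonempty) path. -/
def tgtOf (t : A → V) (l : List A) : Option V := l.getLast?.map t

/-- `l` is a nontrivial cycle. -/
def IsCycleList (s t : A → V) (l : List A) : Prop :=
  l ≠ [] ∧ IsPath s t l ∧ tgtOf t l = srcOf s l

/-- `Z` is a minimal set of path relations of length at least two. -/
def MinimalRels (s t : A → V) (Z : Set (List A)) : Prop :=
  ∀ z ∈ Z, IsPath s t z ∧ 2 ≤ z.length ∧ ∀ w ∈ Z, w <:+: z → w = z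

/-- `l` belongs to `B`: it is a path containing no subpath from `Z`
(the basis of the monomial algebra, positive length part). -/
def InB (s t : A → V) (Z : Set (List A)) (l : List A) : Prop :=
  IsPath s t l ∧ ∀ z ∈ Z, ¬ z <:+: l

/-- `(a, β)` is a cyclic pair in `Q₁ ⊙ B` (if `β = []` it stands for the
trivial path at `s a = t a`). -/
def PairOK (s t : A → V) (Z : Set (List A)) (p : A × List A) : Prop :=
  InB s t Z p.2 ∧ IsCycleList s t (p.2 ++ [p.1])

/-- The set `W` of cycles containing precisely one subpath from `Z`,
located at their end (for a written cycle `γ = ξα`, the list is `α ++ ξ`). -/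
def InW (s t : A → V) (Z : Set (List A)) (l : List A) : Prop :=
  IsCycleList s t l ∧
    ∃ ξ ∈ Z, (∃ α, l = α ++ ξ) ∧ ∀ z ∈ Z, ∀ p q, l = p ++ z ++ q → z = ξ ∧ q = []

/-- Two cycles are in the same circuit iff they are related by rotation. -/
def RotEquiv (l₁ l₂ : List A) : Prop := ∃ n, l₁.rotate n = l₂

end Monomial

namespace Monomial

open Finsupp Classical




variable {V A : Type*} {k : Type*} [Field k]

/-- The basis vector of `k(Q₁ ⊙ B)` given by an arrow of a cycle `l` together
with its complement: for the cycle `l = [a₁, …, aₙ]` and index `j`,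
this is the pair `(a_{j+1}, a_{j+1}^{co})`, where `a_{j+1}^{co}` is the
complementary path of the arrow `a_{j+1}` in the cycle; by convention it is `0`
when the complement is not in `B`. -/
noncomputable def bAt (s t : A → V) (Z : Set (List A)) (k : Type*) [Field k]
    (l : List A) (j : ℕ) : (A × List A) →₀ k :=
  match (l.rotate (j + 1)).getLast? with
  | none => 0
  | Option.some a =>
      if InB s t Z ((l.rotate (j + 1)).dropLast) then
        Finsupp.single (a, (l.rotate (j + 1)).dropLast) 1
      else 0

/-- The canonical element `K_C = Σᵢ (aᵢ, aᵢ^{co})` attached to a cycle `γ`. -/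
noncomputable def KElt (s t : A → V) (Z : Set (List A)) (k : Type*) [Field k]
    (γ : List A) : (A × List A) →₀ k :=
  ∑ j ∈ Finset.range γ.length, bAt s t Z k γ j

/-- Value of the differential `d₀` on a basis element `(a, β)`:
`d₀(a,β) = (t a, aβ) − (s a, βa)`, where summands whose second component is a
zero path are interpreted as `0` (the vertex component is determined by the
cycle, so is omitted). -/
noncomputable def d0b (s t : A → V) (Z : Set (List A)) (k : Type*) [Field k]
    (p : A × List A) : List A →₀ k :=
  (if InB s t Z (p.2 ++ [p.1]) then Finsupp.single (p.2 ++ [p.1]) (1 : k) else 0)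
    - (if InB s t Z (p.1 :: p.2) then Finsupp.single (p.1 :: p.2) (1 : k) else 0)

/-- The differential `d₀ : k(Q₁ ⊙ B) → k(Q₀ ⊙ B)`. -/
noncomputable def d0map (s t : A → V) (Z : Set (List A)) {k : Type*} [Field k]
    (f : (A × List A) →₀ k) : List A →₀ k :=
  f.sum fun p c => c • d0b s t Z k p

/-- Value of the differential `d₁` on a basis element `(α, β) ∈ Z ⊙ B`:
for `α = aₙ … a₁` this is `Σᵢ (aᵢ, a_{i-1} … a₁ β aₙ … a_{i+1})`,
with summands whose second component is a zero path interpreted as `0`. -/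
noncomputable def d1b (s t : A → V) (Z : Set (List A)) (k : Type*) [Field k]
    (α β : List A) : (A × List A) →₀ k :=
  ∑ j ∈ Finset.range α.length, bAt s t Z k (β ++ α) (β.length + j)

/-- The differential `d₁ : k(Z ⊙ B) → k(Q₁ ⊙ B)`. -/
noncomputable def d1map (s t : A → V) (Z : Set (List A)) {k : Type*} [Field k]
    (g : (List A × List A) →₀ k) : (A × List A) →₀ k :=
  g.sum fun q c => c • d1b s t Z k q.1 q.2

/-- `(α, β)` is a cyclic pair in `Z ⊙ B`. -/
def ZPairOK (s t : A → V) (Z : Set (List A)) (q : List A × List A) : Prop :=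
  q.1 ∈ Z ∧ InB s t Z q.2 ∧ IsCycleList s t (q.2 ++ q.1)

end Monomial

/-! Vertices and arrows of the crown are both indexed by `ZMod n`, the arrow `i` going from `i`
to `i + 1`, so a path is determined by its first vertex and its length and everything reduces to
arithmetic in `ZMod n`. The relation `a₀γ^{m-1}` has length `L = n(m-1)+1`, and the path of length
`ℓ` from `v` avoids it iff `ℓ < L + (-v).val`. Hence the cyclic pairs `(a, a^co)` are the arrows
with their complements in the cycles of length `qn` for `q < m`, plus one exceptional pair for
`q = m`, whose complement starts right after `a₀`. Both rotations of the exceptional cycle contain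
the relation, so `d₀` kills it, while for `q < m` the kernel of `d₀` identifies the pairs along the
cycle: `ker d₀` has dimension `m`. Among the `Z`-pairs only the one with the shortest complement
has a nonzero image under `d₁`: each of the `m` occurrences of `a₀` in the relation contributes the
exceptional pair, so the boundaries are spanned by `m` times it, which vanishes iff `char k ∣ m`. -/

namespace ZMod

variable {n : ℕ}

theorem natCast_mul_sub_one (hn : 0 < n) {q : ℕ} (hq : 0 < q) :
    ((q * n - 1 : ℕ) : ZMod n) = -1 := by
  rw [Nat.cast_sub (Nat.mul_pos hq hn), Nat.cast_mul, ZMod.natCast_self]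
  simp

theorem natCast_eq_neg_one_iff (hn : 0 < n) {ℓ : ℕ} :
    (ℓ : ZMod n) = -1 ↔ ∃ c, 0 < c ∧ ℓ = c * n - 1 := by
  constructor
  · intro h
    have : ((ℓ + 1 : ℕ) : ZMod n) = 0 := by rw [Nat.cast_succ, h, neg_add_cancel]
    obtain ⟨c, hc⟩ := (ZMod.natCast_eq_zero_iff _ _).1 this
    refine ⟨c, Nat.pos_of_ne_zero ?_, ?_⟩
    · rintro rfl
      simp at hc
    · rw [mul_comm] at hc
      omega
  · rintro ⟨c, hc, rfl⟩
    exact natCast_mul_sub_one hn hc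

theorem exists_add_natCast_eq_zero_iff (hn : 0 < n) (v : ZMod n) (L ℓ : ℕ) :
    (∃ j : ℕ, j + L ≤ ℓ ∧ v + j = 0) ↔ (-v).val + L ≤ ℓ := by
  have : NeZero n := ⟨hn.ne'⟩
  constructor
  · rintro ⟨j, hj, hv⟩
    rw [neg_eq_of_add_eq_zero_right hv, ZMod.val_natCast]
    exact le_trans (by gcongr; exact Nat.mod_le j n) hj
  · intro h
    exact ⟨(-v).val, h, by rw [ZMod.natCast_zmod_val, add_neg_cancel]⟩

theorem apply_eq_apply_zero_of_forall_sub_one {α : Type*} {g : ZMod n → α}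
    (hg : ∀ v, g (v - 1) = g v) (a : ZMod n) : g a = g 0 := by
  obtain ⟨j, rfl⟩ := ZMod.intCast_surjective a
  induction j using Int.induction_on with
  | zero => simp
  | succ j ih => rw [← ih, ← hg, Int.cast_add, Int.cast_one, add_sub_cancel_right]
  | pred j ih => rw [← ih, Int.cast_sub, Int.cast_one, hg]

end ZMod

theorem Finsupp.lsum_toSpanSingleton_apply_eq_sub {α β R : Type*} [CommRing R] [DecidableEq α]
    (b : α → β →₀ R) (x : β) {p₁ p₂ : α}
    (hb : ∀ p, b p x = (if p = p₁ then 1 else 0) - (if p = p₂ then 1 else 0)) (f : α →₀ R) :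
    Finsupp.lsum R (fun p => LinearMap.toSpanSingleton R _ (b p)) f x = f p₁ - f p₂ := by
  induction f using Finsupp.induction_linear with
  | zero => simp
  | add f g hf hg => simp only [map_add, Finsupp.add_apply, hf, hg]; ring
  | single p c => simp [hb, Finsupp.single_apply, mul_sub, eq_comm]

theorem Submodule.finrank_eq_card_of_biorthogonal {k V ι : Type*} [Field k] [AddCommGroup V]
    [Module k V] [Fintype ι] [DecidableEq ι] (K : Submodule k V) (φ : ι → V →ₗ[k] k) (g : ι → V)
    (hg : ∀ i, g i ∈ K) (hφg : ∀ i j, φ i (g j) = if i = j then 1 else 0)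
    (hsep : ∀ f ∈ K, (∀ i, φ i f = 0) → f = 0) :
    Module.finrank k K = Fintype.card ι := by
  let Φ : K →ₗ[k] ι → k := (LinearMap.pi φ).comp K.subtype
  have hΦ : Function.Bijective Φ := by
    refine ⟨(injective_iff_map_eq_zero Φ).2 fun f hf => ?_, fun x => ?_⟩
    · exact Subtype.ext (hsep f f.2 fun i => congrFun hf i)
    · refine ⟨⟨∑ j, x j • g j, Submodule.sum_mem _ fun j _ => K.smul_mem _ (hg j)⟩, ?_⟩
      ext i
      simp [Φ, hφg]
  rw [(LinearEquiv.ofBijective Φ hΦ).finrank_eq, Module.finrank_fintype_fun_eq_card]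

namespace Crown

open Monomial Finsupp

variable {n m : ℕ}

def src : ZMod n → ZMod n := id

def tgt : ZMod n → ZMod n := fun i => i + 1

def path (v : ZMod n) (ℓ : ℕ) : List (ZMod n) := (List.range ℓ).map fun i : ℕ => v + i

section Path

variable {v w : ZMod n} {ℓ : ℕ}

@[simp] theorem length_path : (path v ℓ).length = ℓ := by simp [path]

@[simp] theorem path_zero : path v 0 = [] := rfl

theorem path_add (a b : ℕ) : path v (a + b) = path v a ++ path (v + (a : ZMod n)) b := by
  simp only [path, List.range_add, List.map_append, List.map_map, Function.comp_def]
  congr 2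
  ext i
  push_cast
  ring

theorem path_succ : path v (ℓ + 1) = path v ℓ ++ [v + (ℓ : ZMod n)] := by
  rw [path_add]
  simp [path]

theorem path_succ' : path v (ℓ + 1) = v :: path (v + 1) ℓ := by
  rw [add_comm, path_add]
  simp [path, List.range_one]

@[simp] theorem head?_path : (path v (ℓ + 1)).head? = some v := by simp [path_succ']

@[simp] theorem getLast?_path : (path v (ℓ + 1)).getLast? = some (v + (ℓ : ZMod n)) := by
  simp [path_succ]

theorem path_inj (hℓ : ℓ ≠ 0) : path v ℓ = path w ℓ ↔ v = w := by
  obtain ⟨ℓ, rfl⟩ := Nat.exists_eq_succ_of_ne_zero hℓ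
  constructor
  · intro h
    simpa using congrArg List.head? h
  · rintro rfl
    rfl

theorem append_eq_path_iff {l₁ l₂ : List (ZMod n)} :
    l₁ ++ l₂ = path v (l₁.length + l₂.length) ↔
      l₁ = path v l₁.length ∧ l₂ = path (v + (l₁.length : ZMod n)) l₂.length := by
  rw [path_add]
  refine ⟨fun h => List.append_inj h (by simp), ?_⟩
  rintro ⟨h₁, h₂⟩
  rw [← h₁, ← h₂]

theorem rotate_path (hN : ((ℓ : ℕ) : ZMod n) = 0) {r : ℕ} (hr : r ≤ ℓ) :
    (path v ℓ).rotate r = path (v + (r : ZMod n)) ℓ := by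
  obtain ⟨d, rfl⟩ := Nat.exists_eq_add_of_le hr
  have hvd : v + r + d = v := by rw [add_assoc, ← Nat.cast_add, hN, add_zero]
  rw [List.rotate_eq_drop_append_take (by simp), path_add, List.drop_left' (by simp),
    List.take_left' (by simp), add_comm r d, path_add, hvd]

theorem isPath_path : IsPath src tgt (path v ℓ) := by
  induction ℓ generalizing v with
  | zero => exact List.isChain_nil
  | succ ℓ ih =>
    cases ℓ with
    | zero => exact List.isChain_singleton _
    | succ ℓ =>
      rw [IsPath, List.Chain', path_succ', path_succ', List.isChain_cons_cons, ← path_succ']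
      exact ⟨rfl, ih⟩

theorem cons_eq_path : ∀ {v : ZMod n} {l : List (ZMod n)},
    IsPath src tgt (v :: l) → v :: l = path v (l.length + 1)
  | v, [], _ => by simp [path]
  | v, w :: l, h => by
    rw [IsPath, List.Chain', List.isChain_cons_cons] at h
    obtain ⟨hvw, h⟩ := h
    obtain rfl : w = v + 1 := hvw.symm
    conv_lhs => rw [cons_eq_path h, ← path_succ']
    rfl

theorem exists_eq_path {l : List (ZMod n)} (h : IsPath src tgt l) : ∃ v, l = path v l.length := by
  cases l with
  | nil => exact ⟨0, rfl⟩
  | cons v l => exact ⟨v, cons_eq_path h⟩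

theorem isCycleList_path_iff : IsCycleList src tgt (path v ℓ) ↔ 0 < ℓ ∧ (ℓ : ZMod n) = 0 := by
  cases ℓ with
  | zero => simp [IsCycleList]
  | succ ℓ =>
    simp only [IsCycleList, tgtOf, srcOf, isPath_path, ← List.length_pos_iff, length_path]
    simp [tgt, src, add_assoc]

theorem isCycleList_iff (hn : 0 < n) {l : List (ZMod n)} :
    IsCycleList src tgt l ↔ ∃ v q, 0 < q ∧ l = path v (q * n) := by
  constructor
  · intro h
    obtain ⟨v, hv⟩ := exists_eq_path h.2.1
    rw [hv, isCycleList_path_iff, ZMod.natCast_eq_zero_iff] at h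
    obtain ⟨hpos, q, hq⟩ := h
    refine ⟨v, q, Nat.pos_of_mul_pos_left (hq ▸ hpos), ?_⟩
    rwa [hq, mul_comm] at hv
  · rintro ⟨v, q, hq, rfl⟩
    rw [isCycleList_path_iff]
    exact ⟨Nat.mul_pos hq hn, by simp⟩

theorem infix_path_iff {z : List (ZMod n)} :
    z <:+: path v ℓ ↔ ∃ j, j + z.length ≤ ℓ ∧ z = path (v + (j : ZMod n)) z.length := by
  constructor
  · rintro ⟨u, w, h⟩
    have hℓ : ℓ = u.length + z.length + w.length := by
      simpa [add_assoc] using (congrArg List.length h).symm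
    rw [hℓ, ← List.length_append, append_eq_path_iff, List.length_append,
      append_eq_path_iff] at h
    exact ⟨u.length, by omega, h.1.2⟩
  · rintro ⟨j, hj, hz⟩
    obtain ⟨d, rfl⟩ := Nat.exists_eq_add_of_le hj
    rw [path_add, path_add, ← hz]
    exact ⟨_, _, rfl⟩

end Path

section Relation

def rel (n m : ℕ) : List (ZMod n) := path 0 (n * (m - 1) + 1)

theorem inB_path_iff (hn : 0 < n) {v : ZMod n} {ℓ : ℕ} :
    InB src tgt {rel n m} (path v ℓ) ↔ ℓ < n * (m - 1) + 1 + (-v).val := by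
  simp only [InB, isPath_path, true_and, Set.mem_singleton_iff, forall_eq, infix_path_iff,
    rel, length_path, path_inj (Nat.succ_ne_zero _), eq_comm (a := (0 : ZMod n))]
  rw [ZMod.exists_add_natCast_eq_zero_iff hn]
  omega

theorem inB_path_mul_iff (hn : 0 < n) {v : ZMod n} {q : ℕ} (hq : 0 < q) :
    InB src tgt {rel n m} (path v (q * n)) ↔ q < m := by
  have : NeZero n := ⟨hn.ne'⟩
  have hv := ZMod.val_lt (-v)
  rw [inB_path_iff hn]
  rcases lt_or_ge q m with hqm | hmq
  · have : q * n ≤ n * (m - 1) := by rw [mul_comm n]; gcongr; omega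
    simp only [hqm, iff_true]
    omega
  · have : n * (m - 1) + n ≤ q * n := by
      obtain _ | m := m
      · simpa using Nat.le_mul_of_pos_left n hq
      · calc n * (m + 1 - 1) + n = (m + 1) * n := by rw [Nat.add_sub_cancel]; ring
          _ ≤ q * n := by gcongr
    simp only [not_lt.2 hmq, iff_false]
    omega

theorem inB_path_mul_sub_one_iff (hn : 1 < n) (hm : 0 < m) {v : ZMod n} {q : ℕ} (hq : 0 < q) :
    InB src tgt {rel n m} (path v (q * n - 1)) ↔ q < m ∨ q = m ∧ v = 1 := by
  have : NeZero n := ⟨by omega⟩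
  have hv := ZMod.val_lt (-v)
  have hv₁ : (-v).val = n - 1 ↔ v = 1 := by
    rw [ZMod.neg_val, ← ZMod.val_eq_one hn]
    split_ifs with h
    · simp only [h, ZMod.val_zero]
      omega
    · have := ZMod.val_lt v
      have := (ZMod.val_ne_zero v).2 h
      omega
  obtain ⟨m, rfl⟩ := Nat.exists_eq_add_of_le' hm
  rw [inB_path_iff (by omega), Nat.add_sub_cancel]
  rcases lt_trichotomy q (m + 1) with hqm | rfl | hqm
  · have : q * n ≤ n * m := by rw [mul_comm n]; gcongr; omega
    simp only [hqm, true_or, iff_true]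
    omega
  · have : (m + 1) * n = n * m + n := by ring
    simp only [lt_irrefl, true_and, false_or, ← hv₁]
    omega
  · have : n * m + 2 * n ≤ q * n := by
      calc n * m + 2 * n = (m + 2) * n := by ring
        _ ≤ q * n := by gcongr; omega
    simp only [hqm.ne', not_lt.2 hqm.le, false_and, or_false, iff_false]
    omega

theorem flatten_replicate_append_eq_rel :
    (List.replicate (m - 1) ((List.range n).map (Nat.cast : ℕ → ZMod n))).flatten ++ [0] =
      rel n m := by
  have hγ : (List.range n).map (Nat.cast : ℕ → ZMod n) = path 0 n := by simp [path]
  have hpow : ∀ j, (List.replicate j (path (0 : ZMod n) n)).flatten = path 0 (j * n) := by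
    intro j
    induction j with
    | zero => simp
    | succ j ih => rw [List.replicate_succ, List.flatten_cons, ih, add_mul, one_mul, add_comm,
        path_add, ZMod.natCast_self, add_zero]
  rw [hγ, hpow, rel, mul_comm, path_succ]
  simp

end Relation

section Pairs

/-- The arrow `a` together with its complement in the cycle of length `q * n` through `a`. -/
def pair (q : ℕ) (a : ZMod n) : ZMod n × List (ZMod n) := (a, path (a + 1) (q * n - 1))

variable {q : ℕ} {a : ZMod n}

theorem path_mul_sub_one_concat (hn : 0 < n) (hq : 0 < q) :
    path (a + 1) (q * n - 1) ++ [a] = path (a + 1) (q * n) := by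
  conv_rhs => rw [← Nat.sub_add_cancel (Nat.mul_pos hq hn), path_succ]
  rw [ZMod.natCast_mul_sub_one hn hq, add_neg_cancel_right]

theorem cons_path_mul_sub_one (hn : 0 < n) (hq : 0 < q) :
    a :: path (a + 1) (q * n - 1) = path a (q * n) := by
  rw [← path_succ', Nat.sub_add_cancel (Nat.mul_pos hq hn)]

theorem pair_inj (hn : 0 < n) {q' : ℕ} {a' : ZMod n} (hq : 0 < q) (hq' : 0 < q') :
    pair q a = pair q' a' ↔ q = q' ∧ a = a' := by
  constructor
  · intro h
    simp only [pair, Prod.mk.injEq] at h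
    have hlen := congrArg List.length h.2
    simp only [length_path] at hlen
    have : q * n = q' * n := by
      have := Nat.mul_pos hq hn
      have := Nat.mul_pos hq' hn
      omega
    exact ⟨Nat.eq_of_mul_eq_mul_right hn this, h.1⟩
  · rintro ⟨rfl, rfl⟩
    rfl

theorem isCycleList_append_singleton_iff (hn : 0 < n) {β : List (ZMod n)} :
    IsCycleList src tgt (β ++ [a]) ↔ ∃ q, 0 < q ∧ β = path (a + 1) (q * n - 1) := by
  rw [isCycleList_iff hn]
  constructor
  · rintro ⟨v, q, hq, h⟩
    rw [← Nat.sub_add_cancel (Nat.mul_pos hq hn), path_succ, ZMod.natCast_mul_sub_one hn hq] at h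
    obtain ⟨rfl, ha⟩ := List.append_inj' h rfl
    obtain rfl : a = v - 1 := by simpa [sub_eq_add_neg] using ha
    exact ⟨q, hq, by rw [sub_add_cancel]⟩
  · rintro ⟨q, hq, rfl⟩
    exact ⟨a + 1, q, hq, path_mul_sub_one_concat hn hq⟩

theorem inB_pair_snd_iff (hn : 1 < n) (hm : 0 < m) (hq : 0 < q) :
    InB src tgt {rel n m} (pair q a).2 ↔ q < m ∨ q = m ∧ a = 0 := by
  rw [pair, inB_path_mul_sub_one_iff hn hm hq, add_eq_right]

theorem pairOK_iff (hn : 1 < n) (hm : 0 < m) {p : ZMod n × List (ZMod n)} :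
    PairOK src tgt {rel n m} p ↔ ∃ q a, 0 < q ∧ (q < m ∨ q = m ∧ a = 0) ∧ p = pair q a := by
  obtain ⟨a, β⟩ := p
  simp only [PairOK, isCycleList_append_singleton_iff (Nat.zero_lt_of_lt hn)]
  constructor
  · rintro ⟨hB, q, hq, rfl⟩
    exact ⟨q, a, hq, (inB_pair_snd_iff hn hm hq).1 hB, rfl⟩
  · rintro ⟨q, a, hq, hqa, h⟩
    obtain ⟨rfl, rfl⟩ := Prod.mk.inj h
    exact ⟨(inB_pair_snd_iff hn hm hq).2 hqa, q, hq, rfl⟩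

theorem path_append_rel (hn : 0 < n) {c : ℕ} (hc : 0 < c) :
    path 1 (c * n - 1) ++ rel n m = path 1 ((c + (m - 1)) * n) := by
  have hcn := Nat.mul_pos hc hn
  have : c * n - 1 + (n * (m - 1) + 1) = (c + (m - 1)) * n := by
    rw [add_mul, mul_comm (m - 1)]
    omega
  rw [rel, ← this, path_add (c * n - 1), ZMod.natCast_mul_sub_one hn hc, add_neg_cancel]

theorem isCycleList_append_rel_iff (hn : 1 < n) {β : List (ZMod n)} :
    IsCycleList src tgt (β ++ rel n m) ↔ ∃ c, 0 < c ∧ β = path 1 (c * n - 1) := by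
  have hn₀ : 0 < n := by omega
  constructor
  · intro h
    obtain ⟨v, hv⟩ := exists_eq_path h.2.1
    rw [hv, isCycleList_path_iff, List.length_append, rel, length_path, Nat.cast_add] at h
    rw [List.length_append, append_eq_path_iff, rel, length_path,
      path_inj (Nat.succ_ne_zero _)] at hv
    have hβ : (β.length : ZMod n) = -1 := by
      simpa [eq_neg_iff_add_eq_zero] using h.2
    obtain ⟨c, hc, hlen⟩ := (ZMod.natCast_eq_neg_one_iff hn₀).1 hβ
    have hv₁ : v = 1 := by
      have := hv.2
      rw [hβ] at this
      linear_combination -this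
    exact ⟨c, hc, by rw [hv.1, ← hlen, hv₁]⟩
  · rintro ⟨c, hc, rfl⟩
    rw [path_append_rel hn₀ hc]
    exact (isCycleList_iff hn₀).2 ⟨1, _, by positivity, rfl⟩

theorem zPairOK_iff (hn : 1 < n) (hm : 0 < m) {p : List (ZMod n) × List (ZMod n)} :
    ZPairOK src tgt {rel n m} p ↔ ∃ c, 0 < c ∧ c ≤ m ∧ p = (rel n m, path 1 (c * n - 1)) := by
  obtain ⟨α, β⟩ := p
  simp only [ZPairOK, Set.mem_singleton_iff]
  constructor
  · rintro ⟨rfl, hB, hcyc⟩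
    obtain ⟨c, hc, rfl⟩ := (isCycleList_append_rel_iff hn).1 hcyc
    have hcm := (inB_path_mul_sub_one_iff hn hm hc).1 hB
    exact ⟨c, hc, hcm.elim (·.le) (·.1.le), rfl⟩
  · rintro ⟨c, hc, hcm, h⟩
    obtain ⟨rfl, rfl⟩ := Prod.mk.inj h
    refine ⟨rfl, (inB_path_mul_sub_one_iff hn hm hc).2 ((lt_or_eq_of_le hcm).imp_right (⟨·, rfl⟩)),
      (isCycleList_append_rel_iff hn).2 ⟨c, hc, rfl⟩⟩

end Pairs

section Differentials

variable {k : Type*} [Field k]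

open scoped Classical Finset

theorem bAt_path_mul (hn : 0 < n) (Z : Set (List (ZMod n))) {v : ZMod n} {q i : ℕ}
    (hq : 0 < q) (hi : i < q * n) :
    bAt src tgt Z k (path v (q * n)) i =
      if InB src tgt Z (pair q (v + i : ZMod n)).2 then single (pair q (v + i : ZMod n)) 1
      else 0 := by
  have hrot : (path v (q * n)).rotate (i + 1) =
      (pair q (v + i : ZMod n)).2 ++ [(pair q (v + i : ZMod n)).1] := by
    rw [rotate_path (by simp) hi, pair, path_mul_sub_one_concat hn hq, Nat.cast_succ, add_assoc]
  simp only [bAt, hrot, List.getLast?_concat, List.dropLast_concat]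

theorem card_filter_dvd_range (hn : 0 < n) (q : ℕ) :
    #{j ∈ Finset.range (n * q + 1) | n ∣ j} = q + 1 := by
  rw [Nat.range_succ_eq_Icc_zero, Finset.Icc_eq_cons_Ioc (Nat.zero_le _),
    Finset.filter_cons_of_pos _ _ _ _ (dvd_zero n), Finset.card_cons,
    Nat.Ioc_filter_dvd_card_eq_div, Nat.mul_div_cancel_left _ hn]

theorem d1b_rel (hn : 0 < n) {c : ℕ} (hc : 0 < c) :
    d1b src tgt {rel n m} k (rel n m) (path 1 (c * n - 1)) =
      ∑ j ∈ Finset.range (n * (m - 1) + 1),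
        if InB src tgt {rel n m} (pair (c + (m - 1)) (j : ZMod n)).2 then
          single (pair (c + (m - 1)) (j : ZMod n)) 1 else 0 := by
  have hcn := Nat.mul_pos hc hn
  rw [d1b, path_append_rel hn hc, length_path]
  refine Finset.sum_congr (by rw [rel, length_path]) fun j hj => ?_
  rw [Finset.mem_range] at hj
  have hi : c * n - 1 + j < (c + (m - 1)) * n := by
    rw [add_mul, mul_comm (m - 1)]
    omega
  rw [bAt_path_mul hn _ (by omega) hi, Nat.cast_add, ZMod.natCast_mul_sub_one hn hc,
    add_neg_cancel_left]

theorem d1b_rel_eq_zero (hn : 1 < n) (hm : 0 < m) {c : ℕ} (hc : 2 ≤ c) :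
    d1b src tgt {rel n m} k (rel n m) (path 1 (c * n - 1)) = 0 := by
  rw [d1b_rel (by omega) (by omega)]
  refine Finset.sum_eq_zero fun j _ => if_neg ?_
  rw [inB_pair_snd_iff hn hm (by omega)]
  omega

theorem d1b_rel_one (hn : 1 < n) (hm : 0 < m) :
    d1b src tgt {rel n m} k (rel n m) (path 1 (1 * n - 1)) = (m : k) • single (pair m 0) 1 := by
  have hm' : 1 + (m - 1) = m := by omega
  have hterm : ∀ j : ℕ, (if InB src tgt {rel n m} (pair m (j : ZMod n)).2 then
      single (pair m (j : ZMod n)) 1 else 0) =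
      if n ∣ j then single (pair m (0 : ZMod n)) (1 : k) else 0 := by
    intro j
    simp only [inB_pair_snd_iff hn hm hm, lt_irrefl, true_and, false_or,
      ZMod.natCast_eq_zero_iff]
    split_ifs with h
    · rw [(ZMod.natCast_eq_zero_iff j n).2 h]
    · rfl
  rw [d1b_rel (by omega) one_pos, hm']
  simp only [hterm, ← Finset.sum_filter, Finset.sum_const, card_filter_dvd_range (by omega : 0 < n),
    Nat.sub_add_cancel hm, ← Nat.cast_smul_eq_nsmul k]

theorem d0b_pair_of_lt (hn : 0 < n) {q : ℕ} (hq : 0 < q) (hqm : q < m) (a : ZMod n) :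
    d0b src tgt {rel n m} k (pair q a) =
      single (path (a + 1) (q * n)) 1 - single (path a (q * n)) 1 := by
  simp only [d0b, pair, path_mul_sub_one_concat hn hq, cons_path_mul_sub_one hn hq,
    inB_path_mul_iff hn hq, hqm, if_true]

theorem d0b_pair_self (hn : 0 < n) (hm : 0 < m) : d0b src tgt {rel n m} k (pair m 0) = 0 := by
  simp only [d0b, pair, path_mul_sub_one_concat hn hm, cons_path_mul_sub_one hn hm,
    inB_path_mul_iff hn hm, lt_irrefl, if_false, sub_zero]

theorem d0b_apply_path (hn : 1 < n) {q : ℕ} (hq : 0 < q) (hqm : q < m) (v : ZMod n)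
    (p : ZMod n × List (ZMod n)) :
    d0b src tgt {rel n m} k p (path v (q * n)) =
      (if p = pair q (v - 1) then 1 else 0) - (if p = pair q v then 1 else 0) := by
  have hn₀ : 0 < n := by omega
  have hB := (inB_path_mul_iff (m := m) hn₀ (v := v) hq).2 hqm
  have h₁ : p.2 ++ [p.1] = path v (q * n) ↔ p = pair q (v - 1) := by
    have hv : path v (q * n) = path (v - 1 + 1) (q * n - 1) ++ [v - 1] := by
      rw [path_mul_sub_one_concat hn₀ hq, sub_add_cancel]
    rw [hv, List.append_singleton_inj, pair, Prod.ext_iff, and_comm]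
  have h₂ : p.1 :: p.2 = path v (q * n) ↔ p = pair q v := by
    rw [← cons_path_mul_sub_one hn₀ hq, List.cons_eq_cons, pair, Prod.ext_iff]
  simp only [d0b, Finsupp.sub_apply]
  congr 1 <;> split_ifs <;> simp_all

end Differentials

section Homology

variable (n m : ℕ) (k : Type*) [Field k]

noncomputable def d0 : ((ZMod n × List (ZMod n)) →₀ k) →ₗ[k] (List (ZMod n) →₀ k) :=
  Finsupp.lsum k fun p => LinearMap.toSpanSingleton k _ (d0b src tgt {rel n m} k p)

noncomputable def d1 :
    ((List (ZMod n) × List (ZMod n)) →₀ k) →ₗ[k] ((ZMod n × List (ZMod n)) →₀ k) :=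
  Finsupp.lsum k fun q => LinearMap.toSpanSingleton k _ (d1b src tgt {rel n m} k q.1 q.2)

noncomputable def cycles : Submodule k ((ZMod n × List (ZMod n)) →₀ k) :=
  Submodule.span k ((fun p => single p (1 : k)) '' {p | PairOK src tgt {rel n m} p}) ⊓
    LinearMap.ker (d0 n m k)

noncomputable def boundaries : Submodule k ((ZMod n × List (ZMod n)) →₀ k) :=
  Submodule.map (d1 n m k)
    (Submodule.span k ((fun q => single q (1 : k)) '' {q | ZPairOK src tgt {rel n m} q}))

variable {n m k}

theorem d0_single (p : ZMod n × List (ZMod n)) (c : k) :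
    d0 n m k (single p c) = c • d0b src tgt {rel n m} k p := by
  rw [d0, lsum_single, LinearMap.toSpanSingleton_apply]

theorem d1_single (q : List (ZMod n) × List (ZMod n)) :
    d1 n m k (single q 1) = d1b src tgt {rel n m} k q.1 q.2 := by
  rw [d1, lsum_single, LinearMap.toSpanSingleton_apply, one_smul]

theorem mem_cycles_iff {f : (ZMod n × List (ZMod n)) →₀ k} :
    f ∈ cycles n m k ↔ ↑f.support ⊆ {p | PairOK src tgt {rel n m} p} ∧ d0 n m k f = 0 := by
  rw [cycles, Submodule.mem_inf, ← supported_eq_span_single, mem_supported, LinearMap.mem_ker]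

theorem apply_pair_eq_of_d0_eq_zero (hn : 1 < n) {q : ℕ} (hq : 0 < q) (hqm : q < m)
    {f : (ZMod n × List (ZMod n)) →₀ k} (hf : d0 n m k f = 0) (a : ZMod n) :
    f (pair q a) = f (pair q 0) := by
  refine ZMod.apply_eq_apply_zero_of_forall_sub_one (g := fun a => f (pair q a)) (fun v => ?_) a
  have hv := congrArg (· (path v (q * n))) hf
  simp only [d0, lsum_toSpanSingleton_apply_eq_sub _ _ (d0b_apply_path hn hq hqm v),
    Finsupp.coe_zero, Pi.zero_apply, sub_eq_zero] at hv
  exact hv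

variable (m k) in
/-- For `1 ≤ q ≤ m` these form a basis of `cycles n m k`. -/
noncomputable def kerBasis [NeZero n] (q : ℕ) :
    (ZMod n × List (ZMod n)) →₀ k :=
  if q < m then ∑ a : ZMod n, single (pair q a) 1 else single (pair q 0) 1

theorem kerBasis_apply_pair [NeZero n] {q q' : ℕ} (hq : 0 < q) (hq' : 0 < q') :
    kerBasis m k q (pair q' (0 : ZMod n)) = if q = q' then 1 else 0 := by
  classical
  have hinj := fun a => pair_inj (n := n) (a := a) (a' := 0) (NeZero.pos n) hq hq'
  unfold kerBasis
  split_ifs <;> simp_all [Finsupp.finsetSum_apply, Finsupp.single_apply]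

theorem kerBasis_mem_cycles [NeZero n] (hn : 1 < n) (hm : 0 < m) {q : ℕ} (hq : 0 < q)
    (hqm : q ≤ m) : kerBasis m k q ∈ cycles n m k := by
  have hpair : ∀ a : ZMod n, (q < m ∨ q = m ∧ a = 0) →
      single (pair q a) (1 : k) ∈ Submodule.span k ((fun p => single p (1 : k)) ''
        {p | PairOK src tgt {rel n m} p}) :=
    fun a ha => Submodule.subset_span ⟨_, (pairOK_iff hn hm).2 ⟨q, a, hq, ha, rfl⟩, rfl⟩
  unfold kerBasis
  split_ifs with hlt
  · refine ⟨Submodule.sum_mem _ fun a _ => hpair a (Or.inl hlt), ?_⟩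
    rw [SetLike.mem_coe, LinearMap.mem_ker, map_sum]
    simp only [d0_single, one_smul, d0b_pair_of_lt (NeZero.pos n) hq hlt, Finset.sum_sub_distrib]
    exact sub_eq_zero.2 (Fintype.sum_equiv (Equiv.addRight 1) _ _ fun _ => rfl)
  · obtain rfl : q = m := by omega
    refine ⟨hpair 0 (Or.inr ⟨rfl, rfl⟩), ?_⟩
    rw [SetLike.mem_coe, LinearMap.mem_ker, d0_single, d0b_pair_self (NeZero.pos n) hm, smul_zero]

theorem eq_zero_of_mem_cycles (hn : 1 < n) (hm : 0 < m) {f : (ZMod n × List (ZMod n)) →₀ k}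
    (hf : f ∈ cycles n m k) (h₀ : ∀ q, 0 < q → q ≤ m → f (pair q 0) = 0) : f = 0 := by
  rw [mem_cycles_iff] at hf
  ext p
  by_contra hp
  obtain ⟨q, a, hq, hqa, rfl⟩ := (pairOK_iff hn hm).1 (hf.1 (Finsupp.mem_support_iff.2 hp))
  rcases hqa with hqm | ⟨rfl, rfl⟩
  · exact hp (by rw [apply_pair_eq_of_d0_eq_zero hn hq hqm hf.2, h₀ q hq hqm.le]; rfl)
  · exact hp (h₀ _ hq le_rfl)

theorem finrank_cycles (hn : 1 < n) (hm : 0 < m) : Module.finrank k (cycles n m k) = m := by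
  have : NeZero n := ⟨by omega⟩
  have h := Submodule.finrank_eq_card_of_biorthogonal (cycles n m k)
    (fun i : Fin m => Finsupp.lapply (pair (i + 1) (0 : ZMod n)))
    (fun i => kerBasis m k (i + 1)) (fun i => kerBasis_mem_cycles hn hm i.succ_pos (by omega))
    (fun i j => by simp [kerBasis_apply_pair, Fin.ext_iff, eq_comm])
    (fun f hf h => eq_zero_of_mem_cycles hn hm hf fun q hq hqm => by
      simpa [Nat.sub_add_cancel hq] using h ⟨q - 1, by omega⟩)
  rwa [Fintype.card_fin] at h

theorem boundaries_eq (hn : 1 < n) (hm : 0 < m) :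
    boundaries n m k = k ∙ ((m : k) • single (pair m (0 : ZMod n)) 1) := by
  refine le_antisymm ((Submodule.map_span_le _ _ _).2 ?_) ?_
  · rintro _ ⟨q, hq, rfl⟩
    obtain ⟨c, hc, -, rfl⟩ := (zPairOK_iff hn hm).1 hq
    rw [d1_single]
    rcases Nat.lt_or_ge c 2 with hc₂ | hc₂
    · obtain rfl : c = 1 := by omega
      rw [d1b_rel_one hn hm]
      exact Submodule.mem_span_singleton_self _
    · rw [d1b_rel_eq_zero hn hm hc₂]
      exact Submodule.zero_mem _
  · rw [Submodule.span_singleton_le_iff_mem, ← d1b_rel_one hn hm,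
      ← d1_single (rel n m, path 1 (1 * n - 1))]
    exact Submodule.mem_map_of_mem
      (Submodule.subset_span ⟨_, (zPairOK_iff hn hm).2 ⟨1, one_pos, hm, rfl⟩, rfl⟩)

theorem boundaries_le_cycles (hn : 1 < n) (hm : 0 < m) : boundaries n m k ≤ cycles n m k := by
  have : NeZero n := ⟨by omega⟩
  have h := kerBasis_mem_cycles (k := k) hn hm hm le_rfl
  rw [kerBasis, if_neg (lt_irrefl m)] at h
  rw [boundaries_eq hn hm, Submodule.span_singleton_le_iff_mem]
  exact Submodule.smul_mem _ _ h

end Homology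

end Crown

open Monomial in
/-- for the crown of length `n > 1` with the single relation
`Z = {a₀γ^{m-1}}` (`m > 1`), the first Hochschild homology of `A = kQ/⟨Z⟩`
(the homology of Bardzell's complex in degree one, i.e. the quotient of
`k(Q₁ ⊙ B) ∩ ker d₀` by `d₁(k(Z ⊙ B))`) has dimension `m` if `char k = p > 0`
divides `m`, and `m − 1` otherwise. -/
theorem crown_HH1_dim {k : Type*} [Field k] {n m : ℕ} (hn : 1 < n) (hm : 1 < m)
    (s t : ZMod n → ZMod n) (hs : s = id) (ht : t = fun i => i + 1)
    (γl : List (ZMod n)) (hγl : γl = (List.range n).map (Nat.cast : ℕ → ZMod n))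
    (Z : Set (List (ZMod n)))
    (hZ : Z = {(List.replicate (m - 1) γl).flatten ++ [(0 : ZMod n)]})
    (d0lin : ((ZMod n × List (ZMod n)) →₀ k) →ₗ[k] (List (ZMod n) →₀ k))
    (hd0 : d0lin = Finsupp.lsum k fun p => LinearMap.toSpanSingleton k _ (d0b s t Z k p))
    (d1lin : ((List (ZMod n) × List (ZMod n)) →₀ k) →ₗ[k] ((ZMod n × List (ZMod n)) →₀ k))
    (hd1 : d1lin = Finsupp.lsum k fun q => LinearMap.toSpanSingleton k _ (d1b s t Z k q.1 q.2))
    (K : Submodule k ((ZMod n × List (ZMod n)) →₀ k))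
    (hK : K = Submodule.span k ((fun p => Finsupp.single p (1 : k)) '' {p | PairOK s t Z p})
            ⊓ LinearMap.ker d0lin)
    (I : Submodule k ((ZMod n × List (ZMod n)) →₀ k))
    (hI : I = Submodule.map d1lin
            (Submodule.span k ((fun q => Finsupp.single q (1 : k)) '' {q | ZPairOK s t Z q}))) :
    I ≤ K ∧
      Module.finrank k K =
        Module.finrank k I + (if (ringChar k) ∣ m then m else m - 1) := by
  have hm₀ : 0 < m := by omega
  obtain rfl : s = Crown.src := hs
  obtain rfl : t = Crown.tgt := ht
  obtain rfl : Z = {Crown.rel n m} := by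
    rw [hZ, hγl, Crown.flatten_replicate_append_eq_rel]
  subst hd0 hd1
  obtain rfl : K = Crown.cycles n m k := hK
  obtain rfl : I = Crown.boundaries n m k := hI
  refine ⟨Crown.boundaries_le_cycles hn hm₀, ?_⟩
  rw [Crown.finrank_cycles hn hm₀, Crown.boundaries_eq hn hm₀]
  split_ifs with hdvd
  · rw [(ringChar.spec k m).2 hdvd, zero_smul, Submodule.span_zero_singleton, finrank_bot]
    simp
  · have hv : (m : k) • Finsupp.single (Crown.pair m (0 : ZMod n)) (1 : k) ≠ 0 :=
      smul_ne_zero (mt (ringChar.spec k m).1 hdvd) (Finsupp.single_ne_zero.2 one_ne_zero)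
    rw [finrank_span_singleton hv]
    omega
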